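/- Reachability of the target set in the direct transition system T^di of an AFA is equivalent to reachability in the restricted system T^min which only keeps transitions to ≼-minimal post-states: T^di can reach a configuration satisfying the downward-closed target Final if and only if T^min can. -/

import Mathlib

/-- The pointwise order on bit-vectors in 𝔹^m. -/
def BVLe {m : ℕ} (p q : Fin m → Bool) : Prop := ∀ i, p i = true → q i = true

/-- The strict pointwise order on bit-vectors. -/
def BVLt {m : ℕ} (p q : Fin m → Bool) : Prop := BVLe p q ∧ p ≠ q

/-- Reachability in a transition system. -/
def Reach {S : Type} (Init : S → Prop) (Tr : S → S → Prop) (Final : S → Prop) : Prop :=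
  ∃ (n : ℕ) (qs : Fin (n + 1) → S),
    Init (qs 0) ∧ (∀ i : Fin n, Tr (qs i.castSucc) (qs i.succ)) ∧ Final (qs (Fin.last n))

/-!
Along a run of `T^di`, replace each state by a ≼-minimal one below it, from left to right:
the minimal initial state lies below the original one, and since transitions are antitone in
pre-states, the original next state is still a successor of the new (smaller) state, so a
minimal successor below it exists. The resulting run of `T^min` ends below the original final
state, hence in the downward-closed target; conversely every run of `T^min` is one of `T^di`.
Minimal elements exist because `𝔹^m` is finite.
-/

lemma bvLe_iff_le {m : ℕ} {p q : Fin m → Bool} : BVLe p q ↔ p ≤ q :=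
  forall_congr' fun _ => Bool.le_iff_imp.symm

lemma bvLt_iff_lt {m : ℕ} {p q : Fin m → Bool} : BVLt p q ↔ p < q := by
  rw [BVLt, bvLe_iff_le, lt_iff_le_and_ne]

section MinimalRun

variable {S : Type} [Preorder S] [WellFoundedLT S] {Init : S → Prop} {Trans : S → S → Prop}

lemma exists_minimal_run_le (hpre : ∀ p q q', Trans q q' → p ≤ q → Trans p q') :
    ∀ {n : ℕ} (qs : Fin (n + 1) → S), Init (qs 0) →
      (∀ i : Fin n, Trans (qs i.castSucc) (qs i.succ)) →
      ∃ qs' ≤ qs, Minimal Init (qs' 0) ∧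
        ∀ i : Fin n, Minimal (Trans (qs' i.castSucc)) (qs' i.succ)
  | 0, qs, hinit, _ => by
    obtain ⟨p, hple, hpmin⟩ := exists_minimal_le_of_wellFoundedLT Init (qs 0) hinit
    refine ⟨fun _ => p, fun i => ?_, hpmin, finZeroElim⟩
    rwa [Fin.fin_one_eq_zero i]
  | n + 1, qs, hinit, htrans => by
    obtain ⟨qs', hle, hinit', htrans'⟩ :=
      exists_minimal_run_le hpre (fun i => qs i.castSucc) hinit fun i => htrans i.castSucc
    have hstep : Trans (qs' (Fin.last n)) (qs (Fin.last (n + 1))) :=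
      hpre _ _ _ (htrans (Fin.last n)) (hle (Fin.last n))
    obtain ⟨p, hple, hpmin⟩ := exists_minimal_le_of_wellFoundedLT _ _ hstep
    refine ⟨Fin.snoc qs' p, fun i => ?_, ?_, fun i => ?_⟩
    · induction i using Fin.lastCases with
      | last => simpa using hple
      | cast j => simpa using hle j
    · simpa only [← Fin.castSucc_zero, Fin.snoc_castSucc] using hinit'
    · induction i using Fin.lastCases with
      | last => simpa using hpmin
      | cast j => simpa only [Fin.succ_castSucc, Fin.snoc_castSucc] using htrans' j

theorem reach_iff_reach_minimal {Final : S → Prop}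
    (hpre : ∀ p q q', Trans q q' → p ≤ q → Trans p q')
    (hfinal : ∀ p q, Final q → p ≤ q → Final p) :
    Reach Init Trans Final ↔ Reach (Minimal Init) (fun q => Minimal (Trans q)) Final := by
  constructor
  · rintro ⟨n, qs, hinit, htrans, hF⟩
    obtain ⟨qs', hle, hinit', htrans'⟩ := exists_minimal_run_le hpre qs hinit htrans
    exact ⟨n, qs', hinit', htrans', hfinal _ _ hF (hle _)⟩
  · rintro ⟨n, qs, hinit, htrans, hF⟩
    exact ⟨n, qs, hinit.prop, fun i => (htrans i).prop, hF⟩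

end MinimalRun

theorem reach_direct_iff_reach_min_general {m : ℕ}
    (Init : (Fin m → Bool) → Prop) (Trans : (Fin m → Bool) → (Fin m → Bool) → Prop)
    (Final : (Fin m → Bool) → Prop)
    (hpre : ∀ p q q', Trans q q' → BVLe p q → Trans p q')
    (hfinal : ∀ p q, Final q → BVLe p q → Final p) :
    Reach Init Trans Final ↔
      Reach (fun q => Init q ∧ ∀ p, BVLt p q → ¬ Init p)
        (fun q q' => Trans q q' ∧ ∀ p, BVLt p q' → ¬ Trans q p)
        Final := by
  simp only [bvLe_iff_le] at hpre hfinal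
  simp only [bvLt_iff_lt, ← minimal_iff_forall_lt]
  exact reach_iff_reach_minimal hpre hfinal

/-- reachability of a downward-closed target in the direct
transition system `T^di` (with transitions monotone in post-states and antitone
in pre-states) is equivalent to reachability in the restricted system `T^min`
that keeps only ≼-minimal initial states and transitions to ≼-minimal
post-states. -/
theorem reach_direct_iff_reach_min {m : ℕ}
    (Init : (Fin m → Bool) → Prop) (Trans : (Fin m → Bool) → (Fin m → Bool) → Prop)
    (Final : (Fin m → Bool) → Prop)
    (hpost : ∀ q q' q'', Trans q q' → BVLe q' q'' → Trans q q'')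
    (hpre : ∀ p q q', Trans q q' → BVLe p q → Trans p q')
    (hfinal : ∀ p q, Final q → BVLe p q → Final p) :
    Reach Init Trans Final ↔
      Reach (fun q => Init q ∧ ∀ p, BVLt p q → ¬ Init p)
        (fun q q' => Trans q q' ∧ ∀ p, BVLt p q' → ¬ Trans q p)
        Final :=
  reach_direct_iff_reach_min_general Init Trans Final hpre hfinal
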